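/- Let T and S be A-bounded operators on H admitting A-adjoints (i.e. there exist Ts, Ss with A∘Ts = T*∘A and A∘Ss = S*∘A). Then w_𝔸([[T,S],[−T,−S]]) ≤ w_A(T−S) + (1/2)·‖T+S‖_A. -/

import Mathlib

/-!
Writing `A = R * R` with `R = √A` self-adjoint turns `⟪x, y⟫_A` into `⟪R x, R y⟫`, so
Cauchy–Schwarz, the triangle inequality and the parallelogram law hold for the `A`-seminorm.
For `x = (u, v)` one has `⟪[[T, S], [-T, -S]] x, x⟫_𝔸 = ⟪T u + S v, u - v⟫_A`, and with
`y = u - v`, `z = u + v`, `T u + S v = ((T - S) y + (T + S) z) / 2`. Hence the quantity is at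
most `(w_A(T - S) ‖y‖_A ^ 2 + ‖T + S‖_A ‖z‖_A ‖y‖_A) / 2`, where `‖y‖_A ^ 2 + ‖z‖_A ^ 2 = 2`,
so `‖y‖_A ^ 2 ≤ 2` and `‖z‖_A ‖y‖_A ≤ 1`.
-/

noncomputable def sInner {E : Type*} [NormedAddCommGroup E] [InnerProductSpace ℂ E]
    (A : E →L[ℂ] E) (x y : E) : ℂ := inner ℂ (A x) y

noncomputable def sNorm {E : Type*} [NormedAddCommGroup E] [InnerProductSpace ℂ E]
    (A : E →L[ℂ] E) (x : E) : ℝ := Real.sqrt (sInner A x x).re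

/-- The `A`-operator seminorm. -/
noncomputable def opSNorm {E : Type*} [NormedAddCommGroup E] [InnerProductSpace ℂ E]
    (A T : E →L[ℂ] E) : ℝ := sSup {c | ∃ x : E, sNorm A x = 1 ∧ c = sNorm A (T x)}

/-- The `A`-numerical radius. -/
noncomputable def numRad {E : Type*} [NormedAddCommGroup E] [InnerProductSpace ℂ E]
    (A T : E →L[ℂ] E) : ℝ := sSup {c | ∃ x : E, sNorm A x = 1 ∧ c = ‖sInner A (T x) x‖}

/-- `T` is `A`-bounded. -/
def ABounded {E : Type*} [NormedAddCommGroup E] [InnerProductSpace ℂ E]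
    (A T : E →L[ℂ] E) : Prop := ∃ c > 0, ∀ x : E, sNorm A (T x) ≤ c * sNorm A x

/-- The 2×2 block operator `[[T, X], [Y, S]]` on `H ⊕ H` (with the ℓ² product structure). -/
noncomputable def blk {H : Type*} [NormedAddCommGroup H] [InnerProductSpace ℂ H]
    (T X Y S : H →L[ℂ] H) : WithLp 2 (H × H) →L[ℂ] WithLp 2 (H × H) :=
  ((WithLp.prodContinuousLinearEquiv 2 ℂ H H).symm.toContinuousLinearMap.comp
    (((T.coprod X).prod (Y.coprod S)).comp
      (WithLp.prodContinuousLinearEquiv 2 ℂ H H).toContinuousLinearMap))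

/-- The diagonal operator `𝔸 = diag(A, A)` on `H ⊕ H`. -/
noncomputable def twoA {H : Type*} [NormedAddCommGroup H] [InnerProductSpace ℂ H]
    (A : H →L[ℂ] H) : WithLp 2 (H × H) →L[ℂ] WithLp 2 (H × H) := blk A 0 0 A

section SemiInner

variable {E : Type*} [NormedAddCommGroup E] [InnerProductSpace ℂ E]

lemma sInner_smul_left (A : E →L[ℂ] E) (c : ℂ) (x y : E) :
    sInner A (c • x) y = starRingEnd ℂ c * sInner A x y := by
  simp only [sInner, map_smul, inner_smul_left]

lemma sInner_smul_right (A : E →L[ℂ] E) (c : ℂ) (x y : E) :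
    sInner A x (c • y) = c * sInner A x y := by
  simp only [sInner, inner_smul_right]

lemma sInner_add_left (A : E →L[ℂ] E) (x y z : E) :
    sInner A (x + y) z = sInner A x z + sInner A y z := by
  simp only [sInner, map_add, inner_add_left]

lemma sInner_sub_right (A : E →L[ℂ] E) (x y z : E) :
    sInner A x (y - z) = sInner A x y - sInner A x z := by
  simp only [sInner, inner_sub_right]

lemma sNorm_nonneg (A : E →L[ℂ] E) (x : E) : 0 ≤ sNorm A x := Real.sqrt_nonneg _

lemma sq_sNorm {A : E →L[ℂ] E} (hA : A.IsPositive) (x : E) :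
    sNorm A x ^ 2 = (sInner A x x).re :=
  Real.sq_sqrt (hA.re_inner_nonneg_left x)

lemma opSNorm_nonneg (A T : E →L[ℂ] E) : 0 ≤ opSNorm A T :=
  Real.sSup_nonneg (by rintro _ ⟨x, -, rfl⟩; exact sNorm_nonneg A _)

lemma numRad_nonneg (A T : E →L[ℂ] E) : 0 ≤ numRad A T :=
  Real.sSup_nonneg (by rintro _ ⟨x, -, rfl⟩; exact norm_nonneg _)

end SemiInner

section Positive

variable {E : Type*} [NormedAddCommGroup E] [InnerProductSpace ℂ E] [CompleteSpace E]
  {A : E →L[ℂ] E}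

lemma ContinuousLinearMap.IsPositive.exists_isSelfAdjoint_mul_self_eq (hA : A.IsPositive) :
    ∃ R : E →L[ℂ] E, IsSelfAdjoint R ∧ R * R = A := by
  have hA' : 0 ≤ A := (ContinuousLinearMap.nonneg_iff_isPositive A).mpr hA
  exact ⟨CFC.sqrt A, IsSelfAdjoint.of_nonneg (CFC.sqrt_nonneg A), CFC.sqrt_mul_sqrt_self A hA'⟩

lemma sInner_eq_inner_of_mul_self_eq {R : E →L[ℂ] E} (hR : IsSelfAdjoint R) (hRA : R * R = A)
    (x y : E) : sInner A x y = inner ℂ (R x) (R y) := by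
  rw [sInner, ← hRA, mul_apply_eq_comp, ← ContinuousLinearMap.adjoint_inner_left,
    hR.adjoint_eq]

lemma sNorm_eq_norm_of_mul_self_eq {R : E →L[ℂ] E} (hR : IsSelfAdjoint R) (hRA : R * R = A)
    (x : E) : sNorm A x = ‖R x‖ := by
  have hsq : (inner ℂ (R x) (R x)).re = ‖R x‖ ^ 2 := inner_self_eq_norm_sq (𝕜 := ℂ) (R x)
  rw [sNorm, sInner_eq_inner_of_mul_self_eq hR hRA, hsq, Real.sqrt_sq (norm_nonneg _)]


lemma norm_sInner_le (hA : A.IsPositive) (x y : E) :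
    ‖sInner A x y‖ ≤ sNorm A x * sNorm A y := by
  obtain ⟨R, hR, hRA⟩ := hA.exists_isSelfAdjoint_mul_self_eq
  simp only [sInner_eq_inner_of_mul_self_eq hR hRA, sNorm_eq_norm_of_mul_self_eq hR hRA]
  exact norm_inner_le_norm _ _

lemma sNorm_smul (hA : A.IsPositive) (c : ℂ) (x : E) : sNorm A (c • x) = ‖c‖ * sNorm A x := by
  obtain ⟨R, hR, hRA⟩ := hA.exists_isSelfAdjoint_mul_self_eq
  simp only [sNorm_eq_norm_of_mul_self_eq hR hRA, map_smul, norm_smul]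

lemma sNorm_add_le (hA : A.IsPositive) (x y : E) :
    sNorm A (x + y) ≤ sNorm A x + sNorm A y := by
  obtain ⟨R, hR, hRA⟩ := hA.exists_isSelfAdjoint_mul_self_eq
  simp only [sNorm_eq_norm_of_mul_self_eq hR hRA, map_add]
  exact norm_add_le _ _

lemma sNorm_sub_le (hA : A.IsPositive) (x y : E) :
    sNorm A (x - y) ≤ sNorm A x + sNorm A y := by
  obtain ⟨R, hR, hRA⟩ := hA.exists_isSelfAdjoint_mul_self_eq
  simp only [sNorm_eq_norm_of_mul_self_eq hR hRA, map_sub]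
  exact norm_sub_le _ _

lemma sNorm_add_sq_add_sNorm_sub_sq (hA : A.IsPositive) (x y : E) :
    sNorm A (x + y) ^ 2 + sNorm A (x - y) ^ 2 = 2 * (sNorm A x ^ 2 + sNorm A y ^ 2) := by
  obtain ⟨R, hR, hRA⟩ := hA.exists_isSelfAdjoint_mul_self_eq
  simp only [sNorm_eq_norm_of_mul_self_eq hR hRA, map_add, map_sub]
  exact parallelogram_law_with_norm ℂ _ _

lemma ABounded.add (hA : A.IsPositive) {T S : E →L[ℂ] E} (hT : ABounded A T)
    (hS : ABounded A S) : ABounded A (T + S) := by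
  obtain ⟨c, hc, hTc⟩ := hT
  obtain ⟨d, hd, hSd⟩ := hS
  refine ⟨c + d, by positivity, fun x => ?_⟩
  calc sNorm A ((T + S) x) ≤ sNorm A (T x) + sNorm A (S x) := sNorm_add_le hA _ _
    _ ≤ (c + d) * sNorm A x := by linarith [hTc x, hSd x]

lemma ABounded.sub (hA : A.IsPositive) {T S : E →L[ℂ] E} (hT : ABounded A T)
    (hS : ABounded A S) : ABounded A (T - S) := by
  obtain ⟨c, hc, hTc⟩ := hT
  obtain ⟨d, hd, hSd⟩ := hS
  refine ⟨c + d, by positivity, fun x => ?_⟩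
  calc sNorm A ((T - S) x) ≤ sNorm A (T x) + sNorm A (S x) := sNorm_sub_le hA _ _
    _ ≤ (c + d) * sNorm A x := by linarith [hTc x, hSd x]

lemma le_sSup_unit_mul_sNorm_pow (hA : A.IsPositive) {f : E → ℝ} {k : ℕ} (hk : k ≠ 0)
    (hf : ∀ (c : ℂ) x, f (c • x) = ‖c‖ ^ k * f x) {C : ℝ} (hC : ∀ x, f x ≤ C * sNorm A x ^ k)
    (x : E) : f x ≤ sSup {c | ∃ x, sNorm A x = 1 ∧ c = f x} * sNorm A x ^ k := by
  have hbdd : BddAbove {c | ∃ x, sNorm A x = 1 ∧ c = f x} := by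
    refine ⟨C, ?_⟩
    rintro _ ⟨y, hy, rfl⟩
    simpa [hy] using hC y
  obtain ht | ht := (sNorm_nonneg A x).eq_or_lt
  · have hfx := hC x
    rwa [← ht, zero_pow hk, mul_zero] at hfx ⊢
  set t := sNorm A x
  have hunit : sNorm A ((t : ℂ)⁻¹ • x) = 1 := by
    rw [sNorm_smul hA, norm_inv, Complex.norm_real, Real.norm_of_nonneg ht.le,
      inv_mul_cancel₀ ht.ne']
  calc f x = f ((t : ℂ) • ((t : ℂ)⁻¹ • x)) := by
        rw [smul_smul, mul_inv_cancel₀ (by exact_mod_cast ht.ne'), one_smul]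
    _ = t ^ k * f ((t : ℂ)⁻¹ • x) := by rw [hf, Complex.norm_real, Real.norm_of_nonneg ht.le]
    _ ≤ t ^ k * sSup {c | ∃ x, sNorm A x = 1 ∧ c = f x} :=
        mul_le_mul_of_nonneg_left (le_csSup hbdd ⟨_, hunit, rfl⟩) (by positivity)
    _ = _ := mul_comm _ _

lemma sNorm_apply_le_opSNorm_mul (hA : A.IsPositive) {T : E →L[ℂ] E} (hT : ABounded A T)
    (x : E) : sNorm A (T x) ≤ opSNorm A T * sNorm A x := by
  obtain ⟨C, -, hC⟩ := hT
  have h := le_sSup_unit_mul_sNorm_pow hA one_ne_zero (f := fun x => sNorm A (T x))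
    (fun c x => by rw [map_smul, sNorm_smul hA, pow_one]) (C := C)
    (fun x => by rw [pow_one]; exact hC x) x
  rwa [pow_one] at h

lemma norm_sInner_apply_le_numRad_mul (hA : A.IsPositive) {T : E →L[ℂ] E}
    (hT : ABounded A T) (x : E) : ‖sInner A (T x) x‖ ≤ numRad A T * sNorm A x ^ 2 := by
  obtain ⟨C, -, hC⟩ := hT
  refine le_sSup_unit_mul_sNorm_pow hA two_ne_zero (f := fun x => ‖sInner A (T x) x‖)
    (fun c x => ?_) (C := C) (fun x => ?_) x
  · simp only [map_smul, sInner_smul_left, sInner_smul_right, norm_mul, RCLike.norm_conj]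
    ring
  · calc ‖sInner A (T x) x‖ ≤ sNorm A (T x) * sNorm A x := norm_sInner_le hA _ _
      _ ≤ C * sNorm A x * sNorm A x := by gcongr; exacts [sNorm_nonneg A x, hC x]
      _ = C * sNorm A x ^ 2 := by ring

lemma norm_sInner_add_sub_le (hA : A.IsPositive) {T S : E →L[ℂ] E} (hT : ABounded A T)
    (hS : ABounded A S) (u v : E) (huv : sNorm A u ^ 2 + sNorm A v ^ 2 = 1) :
    ‖sInner A (T u + S v) (u - v)‖ ≤ numRad A (T - S) + 1 / 2 * opSNorm A (T + S) := by
  set y := u - v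
  set z := u + v
  have hdec : T u + S v = (2⁻¹ : ℂ) • ((T - S) y + (T + S) z) := by
    simp only [y, z, sub_apply, add_apply, map_sub, map_add]
    module
  have hpar : sNorm A z ^ 2 + sNorm A y ^ 2 = 2 := by
    rw [sNorm_add_sq_add_sNorm_sub_sq hA, huv, mul_one]
  have hdiff := norm_sInner_apply_le_numRad_mul hA (hT.sub hA hS) y
  have hsum : ‖sInner A ((T + S) z) y‖ ≤ opSNorm A (T + S) * sNorm A z * sNorm A y :=
    (norm_sInner_le hA _ _).trans <| mul_le_mul_of_nonneg_right
      (sNorm_apply_le_opSNorm_mul hA (hT.add hA hS) z) (sNorm_nonneg A y)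
  have hw := numRad_nonneg A (T - S)
  have hN := opSNorm_nonneg A (T + S)
  calc ‖sInner A (T u + S v) y‖
      = 2⁻¹ * ‖sInner A ((T - S) y) y + sInner A ((T + S) z) y‖ := by
        rw [hdec, sInner_smul_left, sInner_add_left, norm_mul]
        norm_num
    _ ≤ 2⁻¹ * (numRad A (T - S) * sNorm A y ^ 2
          + opSNorm A (T + S) * sNorm A z * sNorm A y) := by
        gcongr
        exact (norm_add_le _ _).trans (add_le_add hdiff hsum)
    _ ≤ numRad A (T - S) + 1 / 2 * opSNorm A (T + S) := by
        nlinarith [mul_nonneg hw (sq_nonneg (sNorm A z)),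
          mul_nonneg hN (sq_nonneg (sNorm A z - sNorm A y))]

end Positive

section Block

variable {H : Type*} [NormedAddCommGroup H] [InnerProductSpace ℂ H]

lemma blk_apply_fst (T X Y S : H →L[ℂ] H) (x : WithLp 2 (H × H)) :
    (blk T X Y S x).fst = T x.fst + X x.snd := rfl

lemma blk_apply_snd (T X Y S : H →L[ℂ] H) (x : WithLp 2 (H × H)) :
    (blk T X Y S x).snd = Y x.fst + S x.snd := rfl

lemma sInner_twoA (A : H →L[ℂ] H) (x y : WithLp 2 (H × H)) :
    sInner (twoA A) x y = sInner A x.fst y.fst + sInner A x.snd y.snd := by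
  change inner ℂ (A x.fst + (0 : H →L[ℂ] H) x.snd) y.fst
    + inner ℂ ((0 : H →L[ℂ] H) x.fst + A x.snd) y.snd = _
  simp only [zero_apply, add_zero, zero_add, sInner]

lemma sNorm_twoA_sq {A : H →L[ℂ] H} (hA : A.IsPositive) (x : WithLp 2 (H × H)) :
    sNorm (twoA A) x ^ 2 = sNorm A x.fst ^ 2 + sNorm A x.snd ^ 2 := by
  rw [sq_sNorm hA, sq_sNorm hA, sNorm, sInner_twoA, Complex.add_re, Real.sq_sqrt]
  exact add_nonneg (hA.re_inner_nonneg_left _) (hA.re_inner_nonneg_left _)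

lemma sInner_twoA_blk_neg (A T S : H →L[ℂ] H) (x : WithLp 2 (H × H)) :
    sInner (twoA A) (blk T S (-T) (-S) x) x =
      sInner A (T x.fst + S x.snd) (x.fst - x.snd) := by
  rw [sInner_twoA, blk_apply_fst, blk_apply_snd, sInner_sub_right]
  simp only [sInner, neg_apply, ← neg_add, map_neg, inner_neg_left]
  ring

end Block

theorem stmt9_general {H : Type*} [NormedAddCommGroup H] [InnerProductSpace ℂ H] [CompleteSpace H]
    (A : H →L[ℂ] H) (hA : A.IsPositive)
    (T S : H →L[ℂ] H) (hT : ABounded A T) (hS : ABounded A S) :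
    numRad (twoA A) (blk T S (-T) (-S)) ≤ numRad A (T - S) + (1 / 2) * opSNorm A (T + S) := by
  refine Real.sSup_le ?_
    (add_nonneg (numRad_nonneg A _) (mul_nonneg (by norm_num) (opSNorm_nonneg A _)))
  rintro _ ⟨x, hx, rfl⟩
  rw [sInner_twoA_blk_neg]
  refine norm_sInner_add_sub_le hA hT hS x.fst x.snd ?_
  rw [← sNorm_twoA_sq hA, hx, one_pow]

theorem stmt9 {H : Type*} [NormedAddCommGroup H] [InnerProductSpace ℂ H] [CompleteSpace H]
    (A : H →L[ℂ] H) (hA : A.IsPositive)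
    (T S : H →L[ℂ] H) (hT : ABounded A T) (hS : ABounded A S)
    (hTadm : ∃ Ts : H →L[ℂ] H, A.comp Ts = (ContinuousLinearMap.adjoint T).comp A)
    (hSadm : ∃ Ss : H →L[ℂ] H, A.comp Ss = (ContinuousLinearMap.adjoint S).comp A) :
    numRad (twoA A) (blk T S (-T) (-S)) ≤ numRad A (T - S) + (1 / 2) * opSNorm A (T + S) :=
  stmt9_general A hA T S hT hS
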